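/- arXiv:1604.06503 — 8 statements merged into one kernel-verified Lean document; each statement's English description precedes it below -/
import Mathlib

section
/- In a behavioral specification theory, for all models I₁, I₂ the following are equivalent: (1) χ(I₁) ≤ χ(I₂); (2) χ(I₂) ≤ χ(I₁); (3) Mod(χ(I₁)) ⊆ Mod(χ(I₂)); (4) Mod(χ(I₂)) ⊆ Mod(χ(I₁)); (5) Th(I₁) = Th(I₂). -/
def Th {Proc Spec : Type*} (Sat : Proc → Spec → Prop) (I : Proc) : Set Spec :=
  {S | Sat I S}

def ModOf {Proc Spec : Type*} (Sat : Proc → Spec → Prop) (S : Spec) : Set Proc :=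
  {I | Sat I S}

def IsCharacteristic {Proc Spec : Type*} (Sat : Proc → Spec → Prop) (I : Proc) (S : Spec) : Prop :=
  Sat I S ∧ ∀ I', Sat I' S → Th Sat I' = Th Sat I

/-- A behavioral specification theory: `le` is a preorder on `Spec`, every `χ I` is a
characteristic formula for `I`, and `Sat I S ↔ χ I ≤ S`. -/
def IsSpecTheory {Proc Spec : Type*} (Sat : Proc → Spec → Prop)
    (χ : Proc → Spec) (le : Spec → Spec → Prop) : Prop :=
  (∀ S, le S S) ∧ (∀ S₁ S₂ S₃, le S₁ S₂ → le S₂ S₃ → le S₁ S₃) ∧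
  (∀ I, IsCharacteristic Sat I (χ I)) ∧
  (∀ I S, Sat I S ↔ le (χ I) S)

/-- For models `I₁, I₂` in a behavioral specification theory, the following are
equivalent: `χ I₁ ≤ χ I₂`, `χ I₂ ≤ χ I₁`, `Mod (χ I₁) ⊆ Mod (χ I₂)`,
`Mod (χ I₂) ⊆ Mod (χ I₁)`, and `Th I₁ = Th I₂`. -/
theorem characteristic_formulae_tfae
    {Proc Spec : Type*} (Sat : Proc → Spec → Prop)
    (χ : Proc → Spec) (le : Spec → Spec → Prop)
    (h : IsSpecTheory Sat χ le) (I₁ I₂ : Proc) :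
    [le (χ I₁) (χ I₂),
     le (χ I₂) (χ I₁),
     ModOf Sat (χ I₁) ⊆ ModOf Sat (χ I₂),
     ModOf Sat (χ I₂) ⊆ ModOf Sat (χ I₁),
     Th Sat I₁ = Th Sat I₂].TFAE := by
  obtain ⟨hrefl, htrans, hchar, hsat⟩ := h
  have key : ∀ J K : Proc, le (χ J) (χ K) ↔ Th Sat J = Th Sat K := by
    intro J K
    constructor
    · intro hle
      exact (hchar K).2 J ((hsat J (χ K)).mpr hle)
    · intro hth
      have : Sat J (χ K) := by
        have : Sat K (χ K) := (hchar K).1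
        have hmem : χ K ∈ Th Sat K := this
        rw [← hth] at hmem; exact hmem
      exact (hsat J (χ K)).mp this
  tfae_have 1 ↔ 5 := key I₁ I₂
  tfae_have 2 ↔ 5 := (key I₂ I₁).trans ⟨Eq.symm, Eq.symm⟩
  tfae_have 1 → 3 := by
    intro hle I' hI'
    exact (hsat I' (χ I₂)).mpr (htrans _ _ _ ((hsat I' (χ I₁)).mp hI') hle)
  tfae_have 3 → 1 := by
    intro hsub
    exact (hsat I₁ (χ I₂)).mp (hsub ((hchar I₁).1))
  tfae_have 2 → 4 := by
    intro hle I' hI'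
    exact (hsat I' (χ I₁)).mpr (htrans _ _ _ ((hsat I' (χ I₂)).mp hI') hle)
  tfae_have 4 → 2 := by
    intro hsub
    exact (hsat I₂ (χ I₁)).mp (hsub ((hchar I₂).1))
  tfae_finish
end

section
/- The map χ is an embedding up to equivalence: for models I₁, I₂, Th(I₁) = Th(I₂) iff χ(I₁) and χ(I₂) are modally equivalent (χ(I₁) ≤ χ(I₂) and χ(I₂) ≤ χ(I₁)), iff they are semantically equivalent (Mod(χ(I₁)) = Mod(χ(I₂))). -/
/-- `χ` is an embedding up to equivalence: `Th I₁ = Th I₂` iff `χ I₁` and `χ I₂` are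
modally equivalent, iff they are semantically equivalent. -/
theorem chi_embedding_up_to_equivalence
    {Proc Spec : Type*} (Sat : Proc → Spec → Prop)
    (χ : Proc → Spec) (le : Spec → Spec → Prop)
    (h : IsSpecTheory Sat χ le) (I₁ I₂ : Proc) :
    (Th Sat I₁ = Th Sat I₂ ↔ (le (χ I₁) (χ I₂) ∧ le (χ I₂) (χ I₁))) ∧
    (Th Sat I₁ = Th Sat I₂ ↔ ModOf Sat (χ I₁) = ModOf Sat (χ I₂)) := by
  obtain ⟨hrefl, htrans, hchar, hiff⟩ := h
  have hsat : ∀ I, Sat I (χ I) := fun I => (hchar I).1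
  have thEq : ∀ (J K : Proc), Th Sat J = Th Sat K → le (χ J) (χ K) := by
    intro J K hTh
    have : Sat J (χ K) := by
      have : χ K ∈ Th Sat K := hsat K
      rw [← hTh] at this
      exact this
    exact (hiff J (χ K)).1 this
  have modal_to_th : ∀ (J K : Proc), le (χ J) (χ K) → Th Sat J = Th Sat K := by
    intro J K hle
    exact (hchar K).2 J ((hiff J (χ K)).2 hle)
  constructor
  · constructor
    · intro hTh
      exact ⟨thEq _ _ hTh, thEq _ _ hTh.symm⟩
    · intro ⟨h1, _⟩
      exact modal_to_th _ _ h1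
  · constructor
    · intro hTh
      ext I
      simp only [ModOf, Set.mem_setOf_eq, hiff]
      constructor
      · intro hle
        exact htrans _ _ _ hle (thEq _ _ hTh)
      · intro hle
        exact htrans _ _ _ hle (thEq _ _ hTh.symm)
    · intro hMod
      have : Sat I₁ (χ I₂) := by
        have : I₁ ∈ ModOf Sat (χ I₁) := hsat I₁
        rw [hMod] at this
        exact this
      exact (hchar I₂).2 I₁ this
end

section
/- For labeled transition systems I₁, I₂, the DMTS modal refinement χ(I₁) ≤ χ(I₂) holds if and only if I₁ and I₂ are bisimilar. In particular, ≤ restricted to the image of χ is symmetric. -/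
/-- A labeled transition system over a finite alphabet `A`:
finitely many states, an initial state, and labeled transitions. -/
structure LTS (A : Type) [Fintype A] where
  St : Type
  fin : Fintype St
  init : St
  tr : St → A → St → Prop

/-- A disjunctive modal transition system over a finite alphabet `A`. -/
structure DMTS (A : Type) [Fintype A] where
  St : Type
  fin : Fintype St
  init : Set St
  may : St → A → St → Prop
  must : St → Set (A × St) → Prop
  consistent : ∀ s N, must s N → ∀ a t, (a, t) ∈ N → may s a t

variable {A : Type} [Fintype A]

/-- `R` is a modal refinement of `D₁` into `D₂`. -/
def IsModalRefinement (D₁ D₂ : DMTS A) (R : D₁.St → D₂.St → Prop) : Prop :=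
  (∀ s₁ ∈ D₁.init, ∃ s₂ ∈ D₂.init, R s₁ s₂) ∧
  ∀ s₁ s₂, R s₁ s₂ →
    (∀ a t₁, D₁.may s₁ a t₁ → ∃ t₂, D₂.may s₂ a t₂ ∧ R t₁ t₂) ∧
    (∀ N₂, D₂.must s₂ N₂ → ∃ N₁, D₁.must s₁ N₁ ∧
      ∀ a t₁, (a, t₁) ∈ N₁ → ∃ t₂, (a, t₂) ∈ N₂ ∧ R t₁ t₂)

/-- Modal refinement `D₁ ≤ D₂`. -/
def dmtsLe (D₁ D₂ : DMTS A) : Prop := ∃ R, IsModalRefinement D₁ D₂ R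

/-- The standard embedding of LTS into DMTS. -/
def chi (I : LTS A) : DMTS A where
  St := I.St
  fin := I.fin
  init := {I.init}
  may := I.tr
  must := fun s N => ∃ a t, I.tr s a t ∧ N = {(a, t)}
  consistent := by
    rintro s N ⟨a, t, htr, rfl⟩ a' t' ht'
    simp only [Set.mem_singleton_iff, Prod.mk.injEq] at ht'
    obtain ⟨rfl, rfl⟩ := ht'
    exact htr

/-- `R` is a bisimulation between the LTS `I₁` and `I₂`. -/
def IsBisimulation (I₁ I₂ : LTS A) (R : I₁.St → I₂.St → Prop) : Prop :=
  R I₁.init I₂.init ∧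
  ∀ s₁ s₂, R s₁ s₂ →
    (∀ a t₁, I₁.tr s₁ a t₁ → ∃ t₂, I₂.tr s₂ a t₂ ∧ R t₁ t₂) ∧
    (∀ a t₂, I₂.tr s₂ a t₂ → ∃ t₁, I₁.tr s₁ a t₁ ∧ R t₁ t₂)

/-- `I₁` and `I₂` are bisimilar. -/
def Bisimilar (I₁ I₂ : LTS A) : Prop := ∃ R, IsBisimulation I₁ I₂ R

/-- `R` is a simulation of LTS `I₁` into `I₂`. -/
def IsSimulation (I₁ I₂ : LTS A) (R : I₁.St → I₂.St → Prop) : Prop :=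
  R I₁.init I₂.init ∧
  ∀ s₁ s₂, R s₁ s₂ → ∀ a t₁, I₁.tr s₁ a t₁ → ∃ t₂, I₂.tr s₂ a t₂ ∧ R t₁ t₂

/-- `(R₁, R₂)` is a simulation refinement of `D₁` into `D₂`. -/
def IsSimRefinement (D₁ D₂ : DMTS A) (R₁ R₂ : D₁.St → D₂.St → Prop) : Prop :=
  (∀ s₁ ∈ D₁.init, ∃ s₂ ∈ D₂.init, R₁ s₁ s₂) ∧
  (∀ s₂ ∈ D₂.init, ∃ s₁ ∈ D₁.init, R₂ s₁ s₂) ∧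
  (∀ s₁ s₂, R₁ s₁ s₂ → ∀ a t₁, D₁.may s₁ a t₁ → ∃ t₂, D₂.may s₂ a t₂ ∧ R₁ t₁ t₂) ∧
  (∀ s₁ s₂, R₂ s₁ s₂ → ∀ N₂, D₂.must s₂ N₂ → ∃ N₁, D₁.must s₁ N₁ ∧
    ∀ a t₁, (a, t₁) ∈ N₁ → ∃ t₂, (a, t₂) ∈ N₂ ∧ R₂ t₁ t₂)

/-- Simulation refinement `D₁ ≲ D₂`. -/
def dmtsSimLe (D₁ D₂ : DMTS A) : Prop := ∃ R₁ R₂, IsSimRefinement D₁ D₂ R₁ R₂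

/-! In `χ(I)` the must-transitions are the singletons of the transitions of `I`, so the must
clause of modal refinement between `χ(I₁)` and `χ(I₂)` is exactly the backward transfer condition
of a bisimulation, while the may clause is the forward one. Hence the modal refinements between
`χ`-images are precisely the bisimulations, and symmetry is inherited from bisimilarity. -/

theorem chi_must_clause_iff (I₁ I₂ : LTS A) (R : I₁.St → I₂.St → Prop) (s₁ : I₁.St)
    (s₂ : I₂.St) :
    (∀ N₂, (chi I₂).must s₂ N₂ → ∃ N₁, (chi I₁).must s₁ N₁ ∧
      ∀ a t₁, (a, t₁) ∈ N₁ → ∃ t₂, (a, t₂) ∈ N₂ ∧ R t₁ t₂) ↔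
    ∀ a t₂, I₂.tr s₂ a t₂ → ∃ t₁, I₁.tr s₁ a t₁ ∧ R t₁ t₂ := by
  constructor
  · intro h a t₂ htr₂
    obtain ⟨_, ⟨b, t₁, htr₁, rfl⟩, hmatch⟩ := h {(a, t₂)} ⟨a, t₂, htr₂, rfl⟩
    obtain ⟨_, hmem, hR⟩ := hmatch b t₁ rfl
    obtain ⟨rfl, rfl⟩ := Prod.mk.inj hmem
    exact ⟨t₁, htr₁, hR⟩
  · rintro h _ ⟨a, t₂, htr₂, rfl⟩
    obtain ⟨t₁, htr₁, hR⟩ := h a t₂ htr₂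
    exact ⟨{(a, t₁)}, ⟨a, t₁, htr₁, rfl⟩, by rintro _ _ ⟨⟩; exact ⟨t₂, rfl, hR⟩⟩

theorem isModalRefinement_chi_iff (I₁ I₂ : LTS A) (R : I₁.St → I₂.St → Prop) :
    IsModalRefinement (chi I₁) (chi I₂) R ↔ IsBisimulation I₁ I₂ R := by
  refine and_congr ⟨fun h => ?_, fun hR s₁ hs₁ => ⟨I₂.init, rfl, hs₁ ▸ hR⟩⟩
    (forall₂_congr fun s₁ s₂ => imp_congr_right fun _ =>
      and_congr_right' (chi_must_clause_iff I₁ I₂ R s₁ s₂))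
  obtain ⟨_, rfl, hR⟩ := h I₁.init rfl
  exact hR

theorem dmtsLe_chi_iff_bisimilar (I₁ I₂ : LTS A) :
    dmtsLe (chi I₁) (chi I₂) ↔ Bisimilar I₁ I₂ :=
  exists_congr (isModalRefinement_chi_iff I₁ I₂)

theorem IsBisimulation.symm {I₁ I₂ : LTS A} {R : I₁.St → I₂.St → Prop}
    (h : IsBisimulation I₁ I₂ R) : IsBisimulation I₂ I₁ (fun s₂ s₁ => R s₁ s₂) :=
  ⟨h.1, fun s₂ s₁ hR => (h.2 s₁ s₂ hR).symm⟩

theorem Bisimilar.symm {I₁ I₂ : LTS A} : Bisimilar I₁ I₂ → Bisimilar I₂ I₁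
  | ⟨_, hR⟩ => ⟨_, hR.symm⟩

/-- For LTS `I₁, I₂`, `χ(I₁) ≤ χ(I₂)` iff `I₁` and `I₂` are bisimilar; in particular,
modal refinement restricted to the image of `χ` is symmetric. -/
theorem chi_le_iff_bisimilar (I₁ I₂ : LTS A) :
    (dmtsLe (chi I₁) (chi I₂) ↔ Bisimilar I₁ I₂) ∧
    (dmtsLe (chi I₁) (chi I₂) → dmtsLe (chi I₂) (chi I₁)) :=
  ⟨dmtsLe_chi_iff_bisimilar I₁ I₂, fun h =>
    (dmtsLe_chi_iff_bisimilar I₂ I₁).2 ((dmtsLe_chi_iff_bisimilar I₁ I₂).1 h).symm⟩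
end

section
/- For labeled transition systems I₁, I₂, the DMTS simulation refinement χ(I₁) ≲ χ(I₂) holds if and only if I₁ and I₂ are simulation equivalent (there exist a simulation from I₁ to I₂ and a simulation from I₂ to I₁). -/
variable {A : Type} [Fintype A]

/-- `χ(I₁) ≲ χ(I₂)` iff `I₁` and `I₂` are simulation equivalent. -/
theorem chi_simLe_iff_sim_equiv (I₁ I₂ : LTS A) :
    dmtsSimLe (chi I₁) (chi I₂) ↔
      ((∃ R, IsSimulation I₁ I₂ R) ∧ (∃ R, IsSimulation I₂ I₁ R)) := by

  constructor
  · rintro ⟨R₁, R₂, hi₁, hi₂, h₁, h₂⟩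
    constructor
    · refine ⟨R₁, ?_, h₁⟩
      obtain ⟨s₂, hs₂, hR⟩ := hi₁ I₁.init rfl
      simpa [chi] using hs₂ ▸ hR
    · refine ⟨fun s₂ s₁ => R₂ s₁ s₂, ?_, ?_⟩
      · obtain ⟨s₁, hs₁, hR⟩ := hi₂ I₂.init rfl
        simpa [chi] using hs₁ ▸ hR
      · intro s₂ s₁ hR a t₂ htr
        obtain ⟨N₁, ⟨a', t₁, htr₁, rfl⟩, hmap⟩ := h₂ s₁ s₂ hR {(a, t₂)} ⟨a, t₂, htr, rfl⟩
        obtain ⟨t₂', ht₂', hR'⟩ := hmap a' t₁ rfl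
        obtain ⟨rfl, rfl⟩ := ht₂'
        exact ⟨t₁, htr₁, hR'⟩
  · rintro ⟨⟨R₁, hR₁i, hR₁⟩, ⟨R₂, hR₂i, hR₂⟩⟩
    refine ⟨R₁, fun s₁ s₂ => R₂ s₂ s₁, ?_, ?_, hR₁, ?_⟩
    · rintro s₁ rfl; exact ⟨I₂.init, rfl, hR₁i⟩
    · rintro s₂ rfl; exact ⟨I₁.init, rfl, hR₂i⟩
    · rintro s₁ s₂ hR N₂ ⟨a, t₂, htr, rfl⟩
      obtain ⟨t₁, htr₁, hR'⟩ := hR₂ s₂ s₁ hR a t₂ htr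
      exact ⟨{(a, t₁)}, ⟨a, t₁, htr₁, rfl⟩, by rintro a' t' ht'; obtain ⟨rfl, rfl⟩ := ht'; exact ⟨t₂, rfl, hR'⟩⟩
end

section
/- (DMTS, χ, ≲) with simulation refinement is a behavioral specification theory for LTS adequate for simulation equivalence: with I ⊨ D iff χ(I) ≲ D, every χ(I) is a characteristic formula, and Th(I₁) = Th(I₂) iff I₁ and I₂ are simulation equivalent. -/
variable {A : Type} [Fintype A]

/-!
Simulation refinement `≲` is a preorder on DMTS, so the theory `{D | χ(I) ≲ D}` of `I` is an
upper set, and two theories coincide iff the two `χ`-images are `≲`-equivalent. On `χ`-images,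
`≲` is exactly simulation equivalence: the may-part `R₁` is a simulation of `I₁` into `I₂`, and
since every must-set of `χ(I)` is a singleton `{(a, t)}`, the must-part `R₂` read backwards is a
simulation of `I₂` into `I₁`. In particular `≲` is symmetric on `χ`-images.
-/

lemma dmtsSimLe_refl (D : DMTS A) : dmtsSimLe D D :=
  ⟨Eq, Eq, fun s hs => ⟨s, hs, rfl⟩, fun s hs => ⟨s, hs, rfl⟩,
    by rintro s _ rfl a t ht; exact ⟨t, ht, rfl⟩,
    by rintro s _ rfl N hN; exact ⟨N, hN, fun a t ht => ⟨t, ht, rfl⟩⟩⟩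

lemma dmtsSimLe_trans {D₁ D₂ D₃ : DMTS A} (h₁₂ : dmtsSimLe D₁ D₂) (h₂₃ : dmtsSimLe D₂ D₃) :
    dmtsSimLe D₁ D₃ := by
  obtain ⟨R₁, R₂, hinit₁, hinit₂, hmay, hmust⟩ := h₁₂
  obtain ⟨S₁, S₂, hinit₁', hinit₂', hmay', hmust'⟩ := h₂₃
  refine ⟨Relation.Comp R₁ S₁, Relation.Comp R₂ S₂, ?_, ?_, ?_, ?_⟩
  · intro s₁ hs₁
    obtain ⟨s₂, hs₂, hR⟩ := hinit₁ s₁ hs₁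
    obtain ⟨s₃, hs₃, hS⟩ := hinit₁' s₂ hs₂
    exact ⟨s₃, hs₃, s₂, hR, hS⟩
  · intro s₃ hs₃
    obtain ⟨s₂, hs₂, hS⟩ := hinit₂' s₃ hs₃
    obtain ⟨s₁, hs₁, hR⟩ := hinit₂ s₂ hs₂
    exact ⟨s₁, hs₁, s₂, hR, hS⟩
  · rintro s₁ s₃ ⟨s₂, hR, hS⟩ a t₁ ht₁
    obtain ⟨t₂, ht₂, hR'⟩ := hmay s₁ s₂ hR a t₁ ht₁
    obtain ⟨t₃, ht₃, hS'⟩ := hmay' s₂ s₃ hS a t₂ ht₂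
    exact ⟨t₃, ht₃, t₂, hR', hS'⟩
  · rintro s₁ s₃ ⟨s₂, hR, hS⟩ N₃ hN₃
    obtain ⟨N₂, hN₂, hN₂₃⟩ := hmust' s₂ s₃ hS N₃ hN₃
    obtain ⟨N₁, hN₁, hN₁₂⟩ := hmust s₁ s₂ hR N₂ hN₂
    refine ⟨N₁, hN₁, fun a t₁ ht₁ => ?_⟩
    obtain ⟨t₂, ht₂, hR'⟩ := hN₁₂ a t₁ ht₁
    obtain ⟨t₃, ht₃, hS'⟩ := hN₂₃ a t₂ ht₂
    exact ⟨t₃, ht₃, t₂, hR', hS'⟩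

lemma setOf_dmtsSimLe_eq_iff {D₁ D₂ : DMTS A} :
    {D | dmtsSimLe D₁ D} = {D | dmtsSimLe D₂ D} ↔ dmtsSimLe D₁ D₂ ∧ dmtsSimLe D₂ D₁ := by
  constructor
  · intro h
    have h₁₂ : D₂ ∈ {D | dmtsSimLe D₁ D} := h ▸ dmtsSimLe_refl D₂
    have h₂₁ : D₁ ∈ {D | dmtsSimLe D₂ D} := h ▸ dmtsSimLe_refl D₁
    exact ⟨h₁₂, h₂₁⟩
  · rintro ⟨h₁₂, h₂₁⟩
    exact Set.ext fun _ => ⟨dmtsSimLe_trans h₂₁, dmtsSimLe_trans h₁₂⟩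

section Chi

variable {I₁ I₂ : LTS A}

lemma isSimulation_of_isSimRefinement_chi {R₁ R₂ : I₁.St → I₂.St → Prop}
    (h : IsSimRefinement (chi I₁) (chi I₂) R₁ R₂) : IsSimulation I₁ I₂ R₁ := by
  obtain ⟨hinit, -, hmay, -⟩ := h
  obtain ⟨s₂, rfl, hR⟩ := hinit I₁.init rfl
  exact ⟨hR, hmay⟩

lemma isSimulation_flip_of_isSimRefinement_chi {R₁ R₂ : I₁.St → I₂.St → Prop}
    (h : IsSimRefinement (chi I₁) (chi I₂) R₁ R₂) : IsSimulation I₂ I₁ (flip R₂) := by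
  obtain ⟨-, hinit, -, hmust⟩ := h
  obtain ⟨s₁, rfl, hR⟩ := hinit I₂.init rfl
  refine ⟨hR, fun s₂ s₁ hR a t₂ ht₂ => ?_⟩
  obtain ⟨N₁, ⟨a', t₁, ht₁, rfl⟩, hN₁⟩ := hmust s₁ s₂ hR {(a, t₂)} ⟨a, t₂, ht₂, rfl⟩
  obtain ⟨t₂', heq, hR'⟩ := hN₁ a' t₁ rfl
  obtain ⟨rfl, rfl⟩ := Prod.mk.inj heq
  exact ⟨t₁, ht₁, hR'⟩

lemma isSimRefinement_chi_of_isSimulation {R : I₁.St → I₂.St → Prop}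
    {S : I₂.St → I₁.St → Prop} (hR : IsSimulation I₁ I₂ R) (hS : IsSimulation I₂ I₁ S) :
    IsSimRefinement (chi I₁) (chi I₂) R (flip S) := by
  refine ⟨?_, ?_, hR.2, ?_⟩
  · rintro s₁ rfl
    exact ⟨I₂.init, rfl, hR.1⟩
  · rintro s₂ rfl
    exact ⟨I₁.init, rfl, hS.1⟩
  · rintro s₁ s₂ hS' N₂ ⟨a, t₂, ht₂, rfl⟩
    obtain ⟨t₁, ht₁, hS''⟩ := hS.2 s₂ s₁ hS' a t₂ ht₂
    refine ⟨{(a, t₁)}, ⟨a, t₁, ht₁, rfl⟩, ?_⟩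
    rintro a' t' heq
    obtain ⟨rfl, rfl⟩ := Prod.mk.inj heq
    exact ⟨t₂, rfl, hS''⟩

lemma dmtsSimLe_chi_iff :
    dmtsSimLe (chi I₁) (chi I₂) ↔
      (∃ R, IsSimulation I₁ I₂ R) ∧ (∃ R, IsSimulation I₂ I₁ R) := by
  constructor
  · rintro ⟨R₁, R₂, h⟩
    exact ⟨⟨R₁, isSimulation_of_isSimRefinement_chi h⟩,
      ⟨flip R₂, isSimulation_flip_of_isSimRefinement_chi h⟩⟩
  · rintro ⟨⟨R, hR⟩, ⟨S, hS⟩⟩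
    exact ⟨R, flip S, isSimRefinement_chi_of_isSimulation hR hS⟩

lemma dmtsSimLe_chi_symm (h : dmtsSimLe (chi I₁) (chi I₂)) : dmtsSimLe (chi I₂) (chi I₁) :=
  dmtsSimLe_chi_iff.mpr (dmtsSimLe_chi_iff.mp h).symm

end Chi

/-- `(DMTS, χ, ≲)` is a behavioral specification theory for LTS adequate for
simulation equivalence: with `I ⊨ D ⟺ χ(I) ≲ D`, every `χ(I)` is a characteristic
formula, and `Th I₁ = Th I₂` iff `I₁` and `I₂` are simulation equivalent. -/
theorem dmts_sim_spec_theory_adequate_for_sim_equiv :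
    (∀ I : LTS A, dmtsSimLe (chi I) (chi I) ∧
      ∀ I' : LTS A, dmtsSimLe (chi I') (chi I) →
        {D : DMTS A | dmtsSimLe (chi I') D} = {D : DMTS A | dmtsSimLe (chi I) D}) ∧
    (∀ I₁ I₂ : LTS A,
      {D : DMTS A | dmtsSimLe (chi I₁) D} = {D : DMTS A | dmtsSimLe (chi I₂) D} ↔
        ((∃ R, IsSimulation I₁ I₂ R) ∧ (∃ R, IsSimulation I₂ I₁ R))) := by
  refine ⟨fun I => ⟨dmtsSimLe_refl _, fun I' h => ?_⟩, fun I₁ I₂ => ?_⟩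
  · exact setOf_dmtsSimLe_eq_iff.mpr ⟨h, dmtsSimLe_chi_symm h⟩
  · rw [setOf_dmtsSimLe_eq_iff, ← dmtsSimLe_chi_iff]
    exact ⟨And.left, fun h => ⟨h, dmtsSimLe_chi_symm h⟩⟩
end

section
/- For every k ∈ ℕ, the relation ≤ₖ on DMTS defined by existence of a branching k-switching relation family is a preorder, and for LTS I₁, I₂, χ(I₁) ≤ₖ χ(I₂) iff there exist branching k-switching relation families (in the LTS sense) both from I₁ to I₂ and from I₂ to I₁ (i.e., I₁ ∼ₖ I₂). Hence ≤ₖ restricted to the image of χ is symmetric. -/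
variable {A : Type} [Fintype A]

/-- A branching `k`-switching relation family `R⁰, …, Rᵏ` from LTS `I₁` to `I₂`
(encoded as `R : ℕ → _`, with only the indices `0, …, k` constrained). -/
def IsBranchingFamily (I₁ I₂ : LTS A) (k : ℕ) (R : ℕ → I₁.St → I₂.St → Prop) : Prop :=
  R 0 I₁.init I₂.init ∧
  ∀ j, j ≤ k → ∀ s₁ s₂, R j s₁ s₂ →
    (Even j →
      (∀ a t₁, I₁.tr s₁ a t₁ → ∃ t₂, I₂.tr s₂ a t₂ ∧ R j t₁ t₂) ∧
      (j < k → ∀ a t₂, I₂.tr s₂ a t₂ → ∃ t₁, I₁.tr s₁ a t₁ ∧ R (j + 1) t₁ t₂)) ∧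
    (Odd j →
      (∀ a t₂, I₂.tr s₂ a t₂ → ∃ t₁, I₁.tr s₁ a t₁ ∧ R j t₁ t₂) ∧
      (j < k → ∀ a t₁, I₁.tr s₁ a t₁ → ∃ t₂, I₂.tr s₂ a t₂ ∧ R (j + 1) t₁ t₂))

/-- A branching `k`-switching relation family `R₁⁰,…,R₁ᵏ, R₂⁰,…,R₂ᵏ` from DMTS `D₁`
to `D₂`. -/
def IsDMTSBranchingFamily (D₁ D₂ : DMTS A) (k : ℕ)
    (R₁ R₂ : ℕ → D₁.St → D₂.St → Prop) : Prop :=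
  (∀ s₁ ∈ D₁.init, ∃ s₂ ∈ D₂.init, R₁ 0 s₁ s₂) ∧
  (∀ s₂ ∈ D₂.init, ∃ s₁ ∈ D₁.init, R₂ 0 s₁ s₂) ∧
  (∀ j, j ≤ k → ∀ s₁ s₂, R₁ j s₁ s₂ →
    (Even j →
      (∀ a t₁, D₁.may s₁ a t₁ → ∃ t₂, D₂.may s₂ a t₂ ∧ R₁ j t₁ t₂) ∧
      (j < k → ∀ N₂, D₂.must s₂ N₂ → ∃ N₁, D₁.must s₁ N₁ ∧
        ∀ a t₁, (a, t₁) ∈ N₁ → ∃ t₂, (a, t₂) ∈ N₂ ∧ R₁ (j + 1) t₁ t₂)) ∧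
    (Odd j →
      (∀ N₂, D₂.must s₂ N₂ → ∃ N₁, D₁.must s₁ N₁ ∧
        ∀ a t₁, (a, t₁) ∈ N₁ → ∃ t₂, (a, t₂) ∈ N₂ ∧ R₁ j t₁ t₂) ∧
      (j < k → ∀ a t₁, D₁.may s₁ a t₁ → ∃ t₂, D₂.may s₂ a t₂ ∧ R₁ (j + 1) t₁ t₂))) ∧
  (∀ j, j ≤ k → ∀ s₁ s₂, R₂ j s₁ s₂ →
    (Even j →
      (∀ N₂, D₂.must s₂ N₂ → ∃ N₁, D₁.must s₁ N₁ ∧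
        ∀ a t₁, (a, t₁) ∈ N₁ → ∃ t₂, (a, t₂) ∈ N₂ ∧ R₂ j t₁ t₂) ∧
      (j < k → ∀ a t₁, D₁.may s₁ a t₁ → ∃ t₂, D₂.may s₂ a t₂ ∧ R₂ (j + 1) t₁ t₂)) ∧
    (Odd j →
      (∀ a t₁, D₁.may s₁ a t₁ → ∃ t₂, D₂.may s₂ a t₂ ∧ R₂ j t₁ t₂) ∧
      (j < k → ∀ N₂, D₂.must s₂ N₂ → ∃ N₁, D₁.must s₁ N₁ ∧
        ∀ a t₁, (a, t₁) ∈ N₁ → ∃ t₂, (a, t₂) ∈ N₂ ∧ R₂ (j + 1) t₁ t₂)))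

/-- The refinement `D₁ ≤ₖ D₂`. -/
def dmtsLeK (k : ℕ) (D₁ D₂ : DMTS A) : Prop :=
  ∃ R₁ R₂, IsDMTSBranchingFamily D₁ D₂ k R₁ R₂

section Aux

variable {A : Type} [Fintype A]

lemma chi_must_cond (I₁ I₂ : LTS A) (s₁ : I₁.St) (s₂ : I₂.St)
    (R : I₁.St → I₂.St → Prop) :
    (∀ N₂, (chi I₂).must s₂ N₂ → ∃ N₁, (chi I₁).must s₁ N₁ ∧
      ∀ a t₁, (a, t₁) ∈ N₁ → ∃ t₂, (a, t₂) ∈ N₂ ∧ R t₁ t₂) ↔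
    (∀ a t₂, I₂.tr s₂ a t₂ → ∃ t₁, I₁.tr s₁ a t₁ ∧ R t₁ t₂) := by
  constructor
  · intro h a t₂ htr
    obtain ⟨N₁, hN₁, hmap⟩ := h {(a, t₂)} ⟨a, t₂, htr, rfl⟩
    obtain ⟨a', t₁', htr', rfl⟩ := hN₁
    obtain ⟨v, hv, hR⟩ := hmap a' t₁' rfl
    obtain ⟨rfl, rfl⟩ := hv
    exact ⟨t₁', htr', hR⟩
  · rintro h N₂ ⟨a, t₂, htr, rfl⟩
    obtain ⟨t₁, h1, hR⟩ := h a t₂ htr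
    refine ⟨{(a, t₁)}, ⟨a, t₁, h1, rfl⟩, ?_⟩
    rintro b u hm
    obtain ⟨rfl, rfl⟩ := hm
    exact ⟨t₂, rfl, hR⟩

lemma chi_family_iff (I₁ I₂ : LTS A) (k : ℕ)
    (R₁ R₂ : ℕ → I₁.St → I₂.St → Prop) :
    IsDMTSBranchingFamily (chi I₁) (chi I₂) k R₁ R₂ ↔
      (IsBranchingFamily I₁ I₂ k R₁ ∧
       IsBranchingFamily I₂ I₁ k (fun j t₂ t₁ => R₂ j t₁ t₂)) := by
  constructor
  · rintro ⟨hi₁, hi₂, h₁, h₂⟩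
    refine ⟨⟨?_, ?_⟩, ?_, ?_⟩
    · obtain ⟨s₂, hs₂, hR⟩ := hi₁ I₁.init rfl
      cases hs₂; exact hR
    · intro j hj s₁ s₂ hR
      obtain ⟨he, ho⟩ := h₁ j hj s₁ s₂ hR
      exact ⟨fun hev => ⟨(he hev).1, fun hlt =>
          (chi_must_cond I₁ I₂ s₁ s₂ (R₁ (j+1))).mp ((he hev).2 hlt)⟩,
        fun hod => ⟨(chi_must_cond I₁ I₂ s₁ s₂ (R₁ j)).mp (ho hod).1,
          (ho hod).2⟩⟩
    · obtain ⟨s₁, hs₁, hR⟩ := hi₂ I₂.init rfl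
      cases hs₁; exact hR
    · intro j hj s₂ s₁ hR
      obtain ⟨he, ho⟩ := h₂ j hj s₁ s₂ hR
      exact ⟨fun hev => ⟨(chi_must_cond I₁ I₂ s₁ s₂ (R₂ j)).mp (he hev).1,
          (he hev).2⟩,
        fun hod => ⟨(ho hod).1, fun hlt =>
          (chi_must_cond I₁ I₂ s₁ s₂ (R₂ (j+1))).mp ((ho hod).2 hlt)⟩⟩
  · rintro ⟨⟨hi₁, h₁⟩, hi₂, h₂⟩
    refine ⟨?_, ?_, ?_, ?_⟩
    · rintro s₁ rfl; exact ⟨I₂.init, rfl, hi₁⟩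
    · rintro s₂ rfl; exact ⟨I₁.init, rfl, hi₂⟩
    · intro j hj s₁ s₂ hR
      obtain ⟨he, ho⟩ := h₁ j hj s₁ s₂ hR
      exact ⟨fun hev => ⟨(he hev).1, fun hlt =>
          (chi_must_cond I₁ I₂ s₁ s₂ (R₁ (j+1))).mpr ((he hev).2 hlt)⟩,
        fun hod => ⟨(chi_must_cond I₁ I₂ s₁ s₂ (R₁ j)).mpr (ho hod).1,
          (ho hod).2⟩⟩
    · intro j hj s₁ s₂ hR
      obtain ⟨he, ho⟩ := h₂ j hj s₂ s₁ hR
      exact ⟨fun hev => ⟨(chi_must_cond I₁ I₂ s₁ s₂ (R₂ j)).mpr (he hev).1,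
          (he hev).2⟩,
        fun hod => ⟨(ho hod).1, fun hlt =>
          (chi_must_cond I₁ I₂ s₁ s₂ (R₂ (j+1))).mpr ((ho hod).2 hlt)⟩⟩

lemma dmtsLeK_chi_iff (k : ℕ) (I₁ I₂ : LTS A) :
    dmtsLeK k (chi I₁) (chi I₂) ↔
      ((∃ R, IsBranchingFamily I₁ I₂ k R) ∧ (∃ R, IsBranchingFamily I₂ I₁ k R)) := by
  constructor
  · rintro ⟨R₁, R₂, h⟩
    obtain ⟨h₁, h₂⟩ := (chi_family_iff I₁ I₂ k R₁ R₂).mp h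
    exact ⟨⟨R₁, h₁⟩, ⟨_, h₂⟩⟩
  · rintro ⟨⟨R, hR⟩, ⟨S, hS⟩⟩
    exact ⟨R, fun j s₁ s₂ => S j s₂ s₁,
      (chi_family_iff I₁ I₂ k R _).mpr ⟨hR, hS⟩⟩

lemma dmtsLeK_refl (k : ℕ) (D : DMTS A) : dmtsLeK k D D := by
  refine ⟨fun _ => Eq, fun _ => Eq, ?_, ?_, ?_, ?_⟩
  · exact fun s hs => ⟨s, hs, rfl⟩
  · exact fun s hs => ⟨s, hs, rfl⟩
  · rintro j hj s₁ s₂ rfl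
    exact ⟨fun _ => ⟨fun a t₁ h => ⟨t₁, h, rfl⟩,
        fun _ N h => ⟨N, h, fun a t₁ hm => ⟨t₁, hm, rfl⟩⟩⟩,
      fun _ => ⟨fun N h => ⟨N, h, fun a t₁ hm => ⟨t₁, hm, rfl⟩⟩,
        fun _ a t₁ h => ⟨t₁, h, rfl⟩⟩⟩
  · rintro j hj s₁ s₂ rfl
    exact ⟨fun _ => ⟨fun N h => ⟨N, h, fun a t₁ hm => ⟨t₁, hm, rfl⟩⟩,
        fun _ a t₁ h => ⟨t₁, h, rfl⟩⟩,
      fun _ => ⟨fun a t₁ h => ⟨t₁, h, rfl⟩,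
        fun _ N h => ⟨N, h, fun a t₁ hm => ⟨t₁, hm, rfl⟩⟩⟩⟩

lemma dmtsLeK_trans (k : ℕ) (D₁ D₂ D₃ : DMTS A)
    (h12 : dmtsLeK k D₁ D₂) (h23 : dmtsLeK k D₂ D₃) : dmtsLeK k D₁ D₃ := by
  obtain ⟨P₁, P₂, pi₁, pi₂, hp₁, hp₂⟩ := h12
  obtain ⟨Q₁, Q₂, qi₁, qi₂, hq₁, hq₂⟩ := h23
  refine ⟨fun j s₁ s₃ => ∃ s₂, P₁ j s₁ s₂ ∧ Q₁ j s₂ s₃,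
    fun j s₁ s₃ => ∃ s₂, P₂ j s₁ s₂ ∧ Q₂ j s₂ s₃, ?_, ?_, ?_, ?_⟩
  · intro s₁ hs₁
    obtain ⟨s₂, hs₂, hP⟩ := pi₁ s₁ hs₁
    obtain ⟨s₃, hs₃, hQ⟩ := qi₁ s₂ hs₂
    exact ⟨s₃, hs₃, s₂, hP, hQ⟩
  · intro s₃ hs₃
    obtain ⟨s₂, hs₂, hQ⟩ := qi₂ s₃ hs₃
    obtain ⟨s₁, hs₁, hP⟩ := pi₂ s₂ hs₂
    exact ⟨s₁, hs₁, s₂, hP, hQ⟩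
  · rintro j hj s₁ s₃ ⟨s₂, hP, hQ⟩
    obtain ⟨pe, po⟩ := hp₁ j hj s₁ s₂ hP
    obtain ⟨qe, qo⟩ := hq₁ j hj s₂ s₃ hQ
    constructor
    · intro hev
      constructor
      · intro a t₁ h1
        obtain ⟨t₂, h2, hP'⟩ := (pe hev).1 a t₁ h1
        obtain ⟨t₃, h3, hQ'⟩ := (qe hev).1 a t₂ h2
        exact ⟨t₃, h3, t₂, hP', hQ'⟩
      · intro hlt N₃ hN₃
        obtain ⟨N₂, hN₂, hm2⟩ := (qe hev).2 hlt N₃ hN₃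
        obtain ⟨N₁, hN₁, hm1⟩ := (pe hev).2 hlt N₂ hN₂
        refine ⟨N₁, hN₁, fun a t₁ hm => ?_⟩
        obtain ⟨t₂, ht₂, hP'⟩ := hm1 a t₁ hm
        obtain ⟨t₃, ht₃, hQ'⟩ := hm2 a t₂ ht₂
        exact ⟨t₃, ht₃, t₂, hP', hQ'⟩
    · intro hod
      constructor
      · intro N₃ hN₃
        obtain ⟨N₂, hN₂, hm2⟩ := (qo hod).1 N₃ hN₃
        obtain ⟨N₁, hN₁, hm1⟩ := (po hod).1 N₂ hN₂
        refine ⟨N₁, hN₁, fun a t₁ hm => ?_⟩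
        obtain ⟨t₂, ht₂, hP'⟩ := hm1 a t₁ hm
        obtain ⟨t₃, ht₃, hQ'⟩ := hm2 a t₂ ht₂
        exact ⟨t₃, ht₃, t₂, hP', hQ'⟩
      · intro hlt a t₁ h1
        obtain ⟨t₂, h2, hP'⟩ := (po hod).2 hlt a t₁ h1
        obtain ⟨t₃, h3, hQ'⟩ := (qo hod).2 hlt a t₂ h2
        exact ⟨t₃, h3, t₂, hP', hQ'⟩
  · rintro j hj s₁ s₃ ⟨s₂, hP, hQ⟩
    obtain ⟨pe, po⟩ := hp₂ j hj s₁ s₂ hP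
    obtain ⟨qe, qo⟩ := hq₂ j hj s₂ s₃ hQ
    constructor
    · intro hev
      constructor
      · intro N₃ hN₃
        obtain ⟨N₂, hN₂, hm2⟩ := (qe hev).1 N₃ hN₃
        obtain ⟨N₁, hN₁, hm1⟩ := (pe hev).1 N₂ hN₂
        refine ⟨N₁, hN₁, fun a t₁ hm => ?_⟩
        obtain ⟨t₂, ht₂, hP'⟩ := hm1 a t₁ hm
        obtain ⟨t₃, ht₃, hQ'⟩ := hm2 a t₂ ht₂
        exact ⟨t₃, ht₃, t₂, hP', hQ'⟩
      · intro hlt a t₁ h1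
        obtain ⟨t₂, h2, hP'⟩ := (pe hev).2 hlt a t₁ h1
        obtain ⟨t₃, h3, hQ'⟩ := (qe hev).2 hlt a t₂ h2
        exact ⟨t₃, h3, t₂, hP', hQ'⟩
    · intro hod
      constructor
      · intro a t₁ h1
        obtain ⟨t₂, h2, hP'⟩ := (po hod).1 a t₁ h1
        obtain ⟨t₃, h3, hQ'⟩ := (qo hod).1 a t₂ h2
        exact ⟨t₃, h3, t₂, hP', hQ'⟩
      · intro hlt N₃ hN₃
        obtain ⟨N₂, hN₂, hm2⟩ := (qo hod).2 hlt N₃ hN₃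
        obtain ⟨N₁, hN₁, hm1⟩ := (po hod).2 hlt N₂ hN₂
        refine ⟨N₁, hN₁, fun a t₁ hm => ?_⟩
        obtain ⟨t₂, ht₂, hP'⟩ := hm1 a t₁ hm
        obtain ⟨t₃, ht₃, hQ'⟩ := hm2 a t₂ ht₂
        exact ⟨t₃, ht₃, t₂, hP', hQ'⟩

end Aux

/-- For every `k ∈ ℕ`, `≤ₖ` is a preorder on DMTS, and on the image of `χ` it
characterizes `∼ₖ`: `χ(I₁) ≤ₖ χ(I₂)` iff there are LTS branching `k`-switching
relation families from `I₁` to `I₂` and from `I₂` to `I₁`.  In particular, `≤ₖ`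
restricted to the image of `χ` is symmetric. -/
theorem dmtsLeK_spec (k : ℕ) :
    (∀ D : DMTS A, dmtsLeK k D D) ∧
    (∀ D₁ D₂ D₃ : DMTS A, dmtsLeK k D₁ D₂ → dmtsLeK k D₂ D₃ → dmtsLeK k D₁ D₃) ∧
    (∀ I₁ I₂ : LTS A, dmtsLeK k (chi I₁) (chi I₂) ↔
      ((∃ R, IsBranchingFamily I₁ I₂ k R) ∧ (∃ R, IsBranchingFamily I₂ I₁ k R))) ∧
    (∀ I₁ I₂ : LTS A, dmtsLeK k (chi I₁) (chi I₂) → dmtsLeK k (chi I₂) (chi I₁)) := by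
  refine ⟨dmtsLeK_refl k, dmtsLeK_trans k, dmtsLeK_chi_iff k, ?_⟩
  intro I₁ I₂ h
  obtain ⟨h₁, h₂⟩ := (dmtsLeK_chi_iff k I₁ I₂).mp h
  exact (dmtsLeK_chi_iff k I₂ I₁).mpr ⟨h₂, h₁⟩
end

section
/- For LTS I₁, I₂, the relation ≈ₖ (existence of linear k-switching relation families in both directions) is an equivalence relation on LTS, for every k ∈ ℕ. -/
variable {A : Type} [Fintype A]

/-- The reflexive-transitive closure `T*` of the transition relation of an LTS,
labeled by words. -/
inductive LStar (I : LTS A) : I.St → List A → I.St → Prop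
  | refl (s : I.St) : LStar I s [] s
  | step {s : I.St} {τ : List A} {t : I.St} {a : A} {u : I.St} :
      LStar I s τ t → I.tr t a u → LStar I s (τ ++ [a]) u

/-- A linear `k`-switching relation family `R⁰, …, Rᵏ` from LTS `I₁` to `I₂`. -/
def IsLinearFamily (I₁ I₂ : LTS A) (k : ℕ) (R : ℕ → I₁.St → I₂.St → Prop) : Prop :=
  R 0 I₁.init I₂.init ∧
  ∀ j, j ≤ k → ∀ s₁ s₂, R j s₁ s₂ →
    (Even j →
      (∀ τ t₁, LStar I₁ s₁ τ t₁ → ∃ t₂, LStar I₂ s₂ τ t₂) ∧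
      (j < k → ∀ τ t₁, LStar I₁ s₁ τ t₁ → ∃ t₂, LStar I₂ s₂ τ t₂ ∧ R (j + 1) t₁ t₂)) ∧
    (Odd j →
      (∀ τ t₂, LStar I₂ s₂ τ t₂ → ∃ t₁, LStar I₁ s₁ τ t₁) ∧
      (j < k → ∀ τ t₂, LStar I₂ s₂ τ t₂ → ∃ t₁, LStar I₁ s₁ τ t₁ ∧ R (j + 1) t₁ t₂))

/-- `I₁ ≈ₖ I₂`: linear `k`-switching relation families exist in both directions. -/
def approxK (k : ℕ) (I₁ I₂ : LTS A) : Prop :=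
  (∃ R, IsLinearFamily I₁ I₂ k R) ∧ (∃ R, IsLinearFamily I₂ I₁ k R)


lemma linearFamily_refl (I : LTS A) (k : ℕ) :
    IsLinearFamily I I k (fun _ s t => s = t) := by
  refine ⟨rfl, fun j _ s₁ s₂ h => ?_⟩
  subst h
  exact ⟨fun _ => ⟨fun τ t₁ h => ⟨t₁, h⟩, fun _ τ t₁ h => ⟨t₁, h, rfl⟩⟩,
    fun _ => ⟨fun τ t₂ h => ⟨t₂, h⟩, fun _ τ t₂ h => ⟨t₂, h, rfl⟩⟩⟩

lemma linearFamily_comp {I₁ I₂ I₃ : LTS A} {k : ℕ} {R S}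
    (hR : IsLinearFamily I₁ I₂ k R) (hS : IsLinearFamily I₂ I₃ k S) :
    IsLinearFamily I₁ I₃ k (fun j s₁ s₃ => ∃ s₂, R j s₁ s₂ ∧ S j s₂ s₃) := by
  obtain ⟨hR0, hR⟩ := hR
  obtain ⟨hS0, hS⟩ := hS
  refine ⟨⟨I₂.init, hR0, hS0⟩, fun j hj s₁ s₃ ⟨s₂, h12, h23⟩ => ?_⟩
  have H12 := hR j hj s₁ s₂ h12
  have H23 := hS j hj s₂ s₃ h23
  constructor
  · intro he
    obtain ⟨a1, b1⟩ := H12.1 he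
    obtain ⟨a2, b2⟩ := H23.1 he
    refine ⟨fun τ t₁ h => ?_, fun hk τ t₁ h => ?_⟩
    · obtain ⟨t₂, h₂⟩ := a1 τ t₁ h
      exact a2 τ t₂ h₂
    · obtain ⟨t₂, h₂, r₂⟩ := b1 hk τ t₁ h
      obtain ⟨t₃, h₃, r₃⟩ := b2 hk τ t₂ h₂
      exact ⟨t₃, h₃, t₂, r₂, r₃⟩
  · intro ho
    obtain ⟨a1, b1⟩ := H12.2 ho
    obtain ⟨a2, b2⟩ := H23.2 ho
    refine ⟨fun τ t₃ h => ?_, fun hk τ t₃ h => ?_⟩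
    · obtain ⟨t₂, h₂⟩ := a2 τ t₃ h
      exact a1 τ t₂ h₂
    · obtain ⟨t₂, h₂, r₂⟩ := b2 hk τ t₃ h
      obtain ⟨t₁, h₁, r₁⟩ := b1 hk τ t₂ h₂
      exact ⟨t₁, h₁, t₂, r₁, r₂⟩

/-- For every `k ∈ ℕ`, `≈ₖ` is an equivalence relation on LTS. -/
theorem approxK_equivalence (k : ℕ) :
    (∀ I : LTS A, approxK k I I) ∧
    (∀ I₁ I₂ : LTS A, approxK k I₁ I₂ → approxK k I₂ I₁) ∧
    (∀ I₁ I₂ I₃ : LTS A, approxK k I₁ I₂ → approxK k I₂ I₃ → approxK k I₁ I₃) := by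
  refine ⟨fun I => ⟨⟨_, linearFamily_refl I k⟩, ⟨_, linearFamily_refl I k⟩⟩,
    fun I₁ I₂ h => ⟨h.2, h.1⟩,
    fun I₁ I₂ I₃ h h' => ⟨?_, ?_⟩⟩
  · obtain ⟨R, hR⟩ := h.1; obtain ⟨S, hS⟩ := h'.1
    exact ⟨_, linearFamily_comp hR hS⟩
  · obtain ⟨S, hS⟩ := h'.2; obtain ⟨R, hR⟩ := h.2
    exact ⟨_, linearFamily_comp hS hR⟩
end

section
/- For k ∈ ℕ, if there is a DMTS-linear k-switching relation family from χ(I₁) to χ(I₂) for LTS I₁, I₂, then its R₁-components form an LTS-linear k-switching relation family from I₁ to I₂, and its R₂-components form one from I₂ to I₁; consequently χ(I₁) ⊑ₖ χ(I₂) implies I₁ ≈ₖ I₂. -/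
variable {A : Type} [Fintype A]

/-- The word-labeled iterated may-transition relation `s ⇢*τ t` of a DMTS. -/
inductive StarMay (D : DMTS A) : D.St → List A → D.St → Prop
  | refl (s : D.St) : StarMay D s [] s
  | step {s : D.St} {τ : List A} {t : D.St} {a : A} {u : D.St} :
      StarMay D s τ t → D.may t a u → StarMay D s (τ ++ [a]) u

/-- The word-labeled iterated must-transition relation `s ⟶*τ t` of a DMTS. -/
inductive StarMust (D : DMTS A) : D.St → List A → D.St → Prop
  | refl (s : D.St) : StarMust D s [] s
  | step {s : D.St} {τ : List A} {t : D.St} {N : Set (A × D.St)} {a : A} {u : D.St} :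
      StarMust D s τ t → D.must t N → (a, u) ∈ N → StarMust D s (τ ++ [a]) u

/-- A linear `k`-switching relation family `R₁⁰,…,R₁ᵏ, R₂⁰,…,R₂ᵏ` from DMTS `D₁` to
`D₂`. -/
def IsDMTSLinearFamily (D₁ D₂ : DMTS A) (k : ℕ)
    (R₁ R₂ : ℕ → D₁.St → D₂.St → Prop) : Prop :=
  (∀ s₁ ∈ D₁.init, ∃ s₂ ∈ D₂.init, R₁ 0 s₁ s₂) ∧
  (∀ s₂ ∈ D₂.init, ∃ s₁ ∈ D₁.init, R₂ 0 s₁ s₂) ∧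
  (∀ j, j ≤ k → ∀ s₁ s₂, R₁ j s₁ s₂ →
    (Even j →
      (∀ τ t₁, StarMay D₁ s₁ τ t₁ → ∃ t₂, StarMay D₂ s₂ τ t₂) ∧
      (j < k → ∀ τ t₁, StarMay D₁ s₁ τ t₁ → ∃ t₂, StarMay D₂ s₂ τ t₂ ∧ R₁ (j + 1) t₁ t₂)) ∧
    (Odd j →
      (∀ τ t₂, StarMust D₂ s₂ τ t₂ → ∃ t₁, StarMust D₁ s₁ τ t₁) ∧
      (j < k → ∀ τ t₂, StarMust D₂ s₂ τ t₂ → ∃ t₁, StarMust D₁ s₁ τ t₁ ∧ R₁ (j + 1) t₁ t₂))) ∧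
  (∀ j, j ≤ k → ∀ s₁ s₂, R₂ j s₁ s₂ →
    (Even j →
      (∀ τ t₂, StarMust D₂ s₂ τ t₂ → ∃ t₁, StarMust D₁ s₁ τ t₁) ∧
      (j < k → ∀ τ t₂, StarMust D₂ s₂ τ t₂ → ∃ t₁, StarMust D₁ s₁ τ t₁ ∧ R₂ (j + 1) t₁ t₂)) ∧
    (Odd j →
      (∀ τ t₁, StarMay D₁ s₁ τ t₁ → ∃ t₂, StarMay D₂ s₂ τ t₂) ∧
      (j < k → ∀ τ t₁, StarMay D₁ s₁ τ t₁ → ∃ t₂, StarMay D₂ s₂ τ t₂ ∧ R₂ (j + 1) t₁ t₂)))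

/-! Under `chi` a must-transition is a may-transition with a singleton disjunction, so both
iterated relations `⇢*` and `⟶*` of `chi I` are `T*`; the conditions of a DMTS-linear family
then read literally as those of two LTS-linear families, one per direction. -/

section Chi

variable (I : LTS A)

theorem starMay_chi : StarMay (chi I) = LStar I := by
  ext s τ t
  constructor <;> intro h <;> induction h with
  | refl => exact .refl _
  | step _ htr ih => exact ih.step htr

theorem starMust_chi : StarMust (chi I) = LStar I := by
  ext s τ t
  constructor
  · intro h
    induction h with
    | refl => exact .refl _
    | step _ hmust hmem ih =>
      obtain ⟨a, u, htr, rfl⟩ := hmust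
      obtain ⟨rfl, rfl⟩ := Prod.mk.inj hmem
      exact ih.step htr
  · intro h
    induction h with
    | refl => exact .refl _
    | step _ htr ih => exact ih.step (N := {(_, _)}) ⟨_, _, htr, rfl⟩ rfl

end Chi

theorem isDMTSLinearFamily_chi_iff {k : ℕ} {I₁ I₂ : LTS A} {R₁ R₂ : ℕ → I₁.St → I₂.St → Prop} :
    IsDMTSLinearFamily (chi I₁) (chi I₂) k R₁ R₂ ↔
      IsLinearFamily I₁ I₂ k R₁ ∧ IsLinearFamily I₂ I₁ k (fun j s₂ s₁ => R₂ j s₁ s₂) := by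
  simp only [IsDMTSLinearFamily, IsLinearFamily, starMay_chi, starMust_chi]
  constructor
  · rintro ⟨h0₁, h0₂, h₁, h₂⟩
    obtain ⟨_, rfl, hR₁⟩ := h0₁ I₁.init rfl
    obtain ⟨_, rfl, hR₂⟩ := h0₂ I₂.init rfl
    exact ⟨⟨hR₁, h₁⟩, hR₂, fun j hj s₂ s₁ => h₂ j hj s₁ s₂⟩
  · rintro ⟨⟨hR₁, h₁⟩, hR₂, h₂⟩
    refine ⟨?_, ?_, h₁, fun j hj s₁ s₂ => h₂ j hj s₂ s₁⟩
    · rintro _ rfl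
      exact ⟨_, rfl, hR₁⟩
    · rintro _ rfl
      exact ⟨_, rfl, hR₂⟩

/-- If there is a DMTS-linear `k`-switching relation family from `χ(I₁)` to `χ(I₂)`,
then its `R₁`-components form an LTS-linear `k`-switching relation family from `I₁`
to `I₂` and its `R₂`-components form one from `I₂` to `I₁`; consequently
`χ(I₁) ⊑ₖ χ(I₂)` implies `I₁ ≈ₖ I₂`. -/
theorem dmts_linear_family_chi (k : ℕ) (I₁ I₂ : LTS A) :
    (∀ R₁ R₂ : ℕ → I₁.St → I₂.St → Prop,
      IsDMTSLinearFamily (chi I₁) (chi I₂) k R₁ R₂ →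
        IsLinearFamily I₁ I₂ k R₁ ∧
        IsLinearFamily I₂ I₁ k (fun j s₂ s₁ => R₂ j s₁ s₂)) ∧
    ((∃ R₁ R₂, IsDMTSLinearFamily (chi I₁) (chi I₂) k R₁ R₂) → approxK k I₁ I₂) := by
  refine ⟨fun _ _ h => isDMTSLinearFamily_chi_iff.1 h, ?_⟩
  rintro ⟨_, _, h⟩
  obtain ⟨h₁, h₂⟩ := isDMTSLinearFamily_chi_iff.1 h
  exact ⟨⟨_, h₁⟩, ⟨_, h₂⟩⟩
end
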